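/- For a ∈ (0,1) and λ > 0, let α*(a, λ) be the unique maximizer on (0,1) of g(α) = log α − λ·KL(Ber(α)‖Ber(a)). Then α*(a, λ) is strictly increasing in a: if 0 < a₁ < a₂ < 1 then α*(a₁, λ) < α*(a₂, λ). -/

import Mathlib

/-!
A maximizer on the open interval satisfies the first-order condition `1/α = λ (logit α - logit a)`,
i.e. `φ α = -λ logit a` with `φ α = 1/α - λ logit α`. Since `φ` is strictly decreasing on `(0,1)`
and `-λ logit a` strictly decreases in `a`, the root `α` strictly increases with `a`.
-/

/-- g(α) = log α − λ·KL(Ber(α)‖Ber(a)). -/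
noncomputable def g (lam a : ℝ) : ℝ → ℝ :=
  fun α => Real.log α -
    lam * (α * Real.log (α / a) + (1 - α) * Real.log ((1 - α) / (1 - a)))

open Real Set

noncomputable def logit (x : ℝ) : ℝ := log x - log (1 - x)

lemma logit_strictMonoOn : StrictMonoOn logit (Ioo 0 1) := by
  intro x hx y hy hxy
  have := log_lt_log hx.1 hxy
  have := log_lt_log (sub_pos.2 hy.2) (sub_lt_sub_left hxy 1)
  unfold logit
  linarith

lemma strictAntiOn_inv_sub_mul_logit {lam : ℝ} (hlam : 0 ≤ lam) :
    StrictAntiOn (fun α => α⁻¹ - lam * logit α) (Ioo 0 1) := by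
  intro x hx y hy hxy
  have := strictAntiOn_inv_pos hx.1 hy.1 hxy
  have := mul_le_mul_of_nonneg_left (logit_strictMonoOn hx hy hxy).le hlam
  linarith

lemma hasDerivAt_g (lam : ℝ) {a α : ℝ} (ha₀ : a ≠ 0) (ha₁ : a ≠ 1) (hα₀ : α ≠ 0)
    (hα₁ : α ≠ 1) : HasDerivAt (g lam a) (α⁻¹ - lam * (logit α - logit a)) α := by
  have h₁ : 1 - α ≠ 0 := sub_ne_zero.2 (Ne.symm hα₁)
  have h₂ : 1 - a ≠ 0 := sub_ne_zero.2 (Ne.symm ha₁)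
  have hl : HasDerivAt (fun x => log (x / a)) α⁻¹ α := by
    convert ((hasDerivAt_id' α).div_const a).log (div_ne_zero hα₀ ha₀) using 1
    field_simp
  have hr : HasDerivAt (fun x => log ((1 - x) / (1 - a))) (-(1 - α)⁻¹) α := by
    convert (((hasDerivAt_id' α).const_sub 1).div_const (1 - a)).log (div_ne_zero h₁ h₂) using 1
    field_simp
  have hg : HasDerivAt (g lam a) _ α := (hasDerivAt_log hα₀).sub
    ((((hasDerivAt_id' α).mul hl).add (((hasDerivAt_id' α).const_sub 1).mul hr)).const_mul lam)
  refine hg.congr_deriv ?_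
  rw [logit, logit, log_div hα₀ ha₀, log_div h₁ h₂]
  field_simp
  ring

lemma inv_eq_mul_logit_sub_of_isMaxOn {lam a α : ℝ} (ha : a ∈ Ioo 0 1) (hα : α ∈ Ioo 0 1)
    (hmax : IsMaxOn (g lam a) (Ioo 0 1) α) : α⁻¹ = lam * (logit α - logit a) := by
  have := (hmax.isLocalMax (Ioo_mem_nhds hα.1 hα.2)).hasDerivAt_eq_zero
    (hasDerivAt_g lam ha.1.ne' ha.2.ne hα.1.ne' hα.2.ne)
  linarith

/-- The maximizer α*(a, λ) is strictly increasing in the starting mass a. -/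
theorem maximizer_monotone_in_start
    (lam : ℝ) (hlam : 0 < lam)
    (a₁ a₂ : ℝ) (ha₁ : a₁ ∈ Set.Ioo (0:ℝ) 1) (ha₂ : a₂ ∈ Set.Ioo (0:ℝ) 1)
    (h12 : a₁ < a₂)
    (α₁ α₂ : ℝ) (hα₁ : α₁ ∈ Set.Ioo (0:ℝ) 1) (hα₂ : α₂ ∈ Set.Ioo (0:ℝ) 1)
    (hmax₁ : ∀ β ∈ Set.Ioo (0:ℝ) 1, g lam a₁ β ≤ g lam a₁ α₁)
    (hmax₂ : ∀ β ∈ Set.Ioo (0:ℝ) 1, g lam a₂ β ≤ g lam a₂ α₂) :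
    α₁ < α₂ := by
  have foc₁ := inv_eq_mul_logit_sub_of_isMaxOn ha₁ hα₁ hmax₁
  have foc₂ := inv_eq_mul_logit_sub_of_isMaxOn ha₂ hα₂ hmax₂
  have hlogit := mul_lt_mul_of_pos_left (logit_strictMonoOn ha₁ ha₂ h12) hlam
  refine ((strictAntiOn_inv_sub_mul_logit hlam.le).lt_iff_gt hα₂ hα₁).1 ?_
  linarith
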